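/- arXiv:0802.0260 — 5 statements merged into one kernel-verified Lean document; each statement's English description precedes it below -/
import Mathlib

section
/- Generalised splicing with rule set R = V⁺-rules equals generalised self-assembly: for languages L₁, L₂, the set of all words z such that z = u₁xv₂ or z = u₂xv₁ for some w₁ = u₁xv₁ ∈ L₁, w₂ = u₂xv₂ ∈ L₂ and nonempty word x, together with L₁ ∪ L₂, equals GSA(L₁,L₂) ∪ L₁ ∪ L₂. -/
/-! A self-assembled word either is one of its two parents or crosses over at a common
nonempty factor `x`, which is exactly what splicing with the rule `x#$x#` produces; conversely
every such splice is a self-assembled word. -/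

/-- `GSAx x w₁ w₂`: the generalised `x`-self-assembly of words `w₁` and `w₂`. -/
def GSAx {α : Type*} (x w₁ w₂ : List α) : Set (List α) :=
  {z | ∃ u₁ v₁ u₂ v₂ : List α, w₁ = u₁ ++ x ++ v₁ ∧ w₂ = u₂ ++ x ++ v₂ ∧
    (z = u₁ ++ x ++ v₁ ∨ z = u₂ ++ x ++ v₂ ∨ z = u₁ ++ x ++ v₂ ∨ z = u₂ ++ x ++ v₁)}

/-- `GSAw w₁ w₂`: union of `GSAx x w₁ w₂` over all nonempty common subwords `x`. -/
def GSAw {α : Type*} (w₁ w₂ : List α) : Set (List α) :=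
  ⋃ x ∈ {x : List α | x ≠ []}, GSAx x w₁ w₂

/-- `GSAL L₁ L₂`: generalised self-assembly of two languages. -/
def GSAL {α : Type*} (L₁ L₂ : Set (List α)) : Set (List α) :=
  ⋃ w₁ ∈ L₁, ⋃ w₂ ∈ L₂, GSAw w₁ w₂

section

variable {α : Type*} (L₁ L₂ : Set (List α))

/-- Generalised splicing of `L₁` and `L₂` with the rules `x#$x#`, `x ∈ V⁺`. -/
def splicePlus : Set (List α) :=
  {z | ∃ x : List α, x ≠ [] ∧ ∃ u₁ v₁ u₂ v₂ : List α,
    u₁ ++ x ++ v₁ ∈ L₁ ∧ u₂ ++ x ++ v₂ ∈ L₂ ∧ (z = u₁ ++ x ++ v₂ ∨ z = u₂ ++ x ++ v₁)}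

theorem splicePlus_subset_GSAL : splicePlus L₁ L₂ ⊆ GSAL L₁ L₂ := by
  rintro z ⟨x, hx, u₁, v₁, u₂, v₂, h₁, h₂, hz⟩
  simp only [GSAL, GSAw, Set.mem_iUnion]
  exact ⟨_, h₁, _, h₂, x, hx, u₁, v₁, u₂, v₂, rfl, rfl, by tauto⟩

theorem GSAx_subset_splicePlus_union {x w₁ w₂ : List α} (hx : x ≠ []) (hw₁ : w₁ ∈ L₁)
    (hw₂ : w₂ ∈ L₂) : GSAx x w₁ w₂ ⊆ splicePlus L₁ L₂ ∪ L₁ ∪ L₂ := by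
  rintro z ⟨u₁, v₁, u₂, v₂, rfl, rfl, rfl | rfl | hz | hz⟩
  · exact .inl (.inr hw₁)
  · exact .inr hw₂
  all_goals exact .inl (.inl ⟨x, hx, u₁, v₁, u₂, v₂, hw₁, hw₂, by tauto⟩)

theorem GSAL_subset_splicePlus_union : GSAL L₁ L₂ ⊆ splicePlus L₁ L₂ ∪ L₁ ∪ L₂ :=
  Set.iUnion₂_subset fun _ hw₁ ↦ Set.iUnion₂_subset fun _ hw₂ ↦
    Set.iUnion₂_subset fun _ hx ↦ GSAx_subset_splicePlus_union L₁ L₂ hx hw₁ hw₂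

end

/-- Generalised splicing with rules x#$x# for x ∈ V⁺, together with the
parent languages, coincides with generalised self-assembly together with the
parent languages. -/
theorem gs_eq_gsa {α : Type*} (L₁ L₂ : Set (List α)) :
    ({z | ∃ x : List α, x ≠ [] ∧ ∃ u₁ v₁ u₂ v₂ : List α,
        u₁ ++ x ++ v₁ ∈ L₁ ∧ u₂ ++ x ++ v₂ ∈ L₂ ∧
        (z = u₁ ++ x ++ v₂ ∨ z = u₂ ++ x ++ v₁)} ∪ L₁ ∪ L₂)
      = GSAL L₁ L₂ ∪ L₁ ∪ L₂ := by
  change splicePlus L₁ L₂ ∪ L₁ ∪ L₂ = _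
  refine Set.Subset.antisymm ?_ ?_
  · gcongr
    exact splicePlus_subset_GSAL L₁ L₂
  · exact Set.union_subset (Set.union_subset (GSAL_subset_splicePlus_union L₁ L₂)
      (Set.subset_union_of_subset_left Set.subset_union_right _)) Set.subset_union_right
end

section
/- The generalised self-assembly of two regular languages is regular: if L₁ and L₂ are regular languages, then GSA(L₁,L₂) is regular. -/
/-! Only the first letter `a` of a common subword matters: cutting both words just before it
yields the same four assemblies. Hence `GSA(L₁, L₂)` consists of the words of `L₁` containing a
letter of some word of `L₂`, the words `u a v` such that `u a` begins a word of `L₁` and `a v`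
ends a word of `L₂`, and the same two languages with `L₁` and `L₂` exchanged. The first kind is
an intersection with a two-state language. For the second, an automaton runs a DFA `M₁` of `L₁`
alongside the set of states a DFA `M₂` of `L₂` can be in after a splice point; this set is
updated letter by letter, a new splice point at `a` being admissible exactly when `M₁` can still
accept after reading `a`. -/

open Language

section

variable {α σ : Type*}

theorem Language.isRegular_of_snoc_invariant [Finite σ] {L : Language α} (f : List α → σ)
    (step : σ → α → σ) (accept : Set σ) (hf : ∀ z a, f (z ++ [a]) = step (f z) a)
    (hL : ∀ z, z ∈ L ↔ f z ∈ accept) : L.IsRegular := by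
  let M : DFA α σ := ⟨step, f [], accept⟩
  have hM (z : List α) : M.eval z = f z := by
    induction z using List.reverseRecOn with
    | nil => rfl
    | append_singleton z a ih => rw [DFA.eval_append_singleton, ih, hf]
  have := Fintype.ofFinite σ
  exact isRegular_iff.2 ⟨σ, this, M, by ext z; rw [DFA.mem_accepts, hM, hL]⟩

def wordsMeeting (P : Set α) : Language α := {z | ∃ a ∈ z, a ∈ P}

@[simp]
theorem mem_wordsMeeting {P : Set α} {z : List α} : z ∈ wordsMeeting P ↔ ∃ a ∈ z, a ∈ P :=
  Iff.rfl

theorem isRegular_wordsMeeting (P : Set α) : (wordsMeeting P).IsRegular := by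
  classical
  refine isRegular_of_snoc_invariant (fun z => decide (∃ a ∈ z, a ∈ P))
    (fun seen a => seen || decide (a ∈ P)) {true} (fun z a => ?_) (fun z => ?_)
  · simp [Bool.or_comm]
  · simp

theorem List.append_singleton_append_eq_append_singleton {u v z : List α} {a b : α} :
    u ++ [a] ++ v = z ++ [b] ↔
      (u = z ∧ a = b ∧ v = []) ∨ ∃ v₀, z = u ++ [a] ++ v₀ ∧ v = v₀ ++ [b] := by
  rcases v.eq_nil_or_concat with rfl | ⟨v₀, c, rfl⟩
  · simp [List.append_singleton_inj]
  · rw [List.concat_eq_append, ← List.append_assoc]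
    simp only [List.append_singleton_inj, List.append_eq_nil_iff, List.cons_ne_nil, and_false,
      false_or]
    grind

def spliceAtLetter (L₁ L₂ : Language α) : Language α :=
  {z | ∃ u a v, z = u ++ [a] ++ v ∧ (∃ v', u ++ [a] ++ v' ∈ L₁) ∧ ∃ u', u' ++ [a] ++ v ∈ L₂}

section spliceStates

variable (L₁ : Language α) (M₂ : DFA α σ)

def spliceStates (z : List α) : Set σ :=
  {s | ∃ u a v, z = u ++ [a] ++ v ∧ (∃ v', u ++ [a] ++ v' ∈ L₁) ∧
    ∃ u', s = M₂.eval (u' ++ [a] ++ v)}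

theorem spliceStates_append_singleton (z : List α) (b : α) :
    spliceStates L₁ M₂ (z ++ [b]) = (M₂.step · b) '' spliceStates L₁ M₂ z ∪
      {s | (∃ v', z ++ [b] ++ v' ∈ L₁) ∧ ∃ u', s = M₂.eval (u' ++ [b])} := by
  ext s
  simp only [spliceStates, Set.mem_union, Set.mem_image, Set.mem_ofPred_eq,
    eq_comm (a := z ++ [b]), List.append_singleton_append_eq_append_singleton]
  constructor
  · rintro ⟨u, a, v, (⟨rfl, rfl, rfl⟩ | ⟨v₀, rfl, rfl⟩), hpre, u', rfl⟩
    · exact Or.inr ⟨hpre, u', by simp⟩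
    · refine Or.inl ⟨_, ⟨u, a, v₀, rfl, hpre, u', rfl⟩, ?_⟩
      rw [← DFA.eval_append_singleton]; simp
  · rintro (⟨_, ⟨u, a, v₀, rfl, hpre, u', rfl⟩, rfl⟩ | ⟨hpre, u', rfl⟩)
    · refine ⟨u, a, v₀ ++ [b], Or.inr ⟨v₀, rfl, rfl⟩, hpre, u', ?_⟩
      rw [← DFA.eval_append_singleton]; simp
    · exact ⟨z, b, [], Or.inl ⟨rfl, rfl, rfl⟩, hpre, u', by simp⟩

theorem mem_spliceAtLetter_accepts {z : List α} :
    z ∈ spliceAtLetter L₁ M₂.accepts ↔ ∃ s ∈ spliceStates L₁ M₂ z, s ∈ M₂.accept := by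
  constructor
  · rintro ⟨u, a, v, rfl, hpre, u', hsuf⟩
    exact ⟨_, ⟨u, a, v, rfl, hpre, u', rfl⟩, hsuf⟩
  · rintro ⟨_, ⟨u, a, v, rfl, hpre, u', rfl⟩, hs⟩
    exact ⟨u, a, v, rfl, hpre, u', hs⟩

end spliceStates

theorem isRegular_spliceAtLetter {L₁ L₂ : Language α} (h₁ : L₁.IsRegular) (h₂ : L₂.IsRegular) :
    (spliceAtLetter L₁ L₂).IsRegular := by
  obtain ⟨σ₁, _, M₁, rfl⟩ := h₁
  obtain ⟨σ₂, _, M₂, rfl⟩ := h₂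
  have hpre (z : List α) (b : α) : (∃ v', z ++ [b] ++ v' ∈ M₁.accepts) ↔
      ∃ v', M₁.evalFrom (M₁.eval z) ([b] ++ v') ∈ M₁.accept := by
    simp only [DFA.mem_accepts, DFA.eval, DFA.evalFrom_of_append]
  refine isRegular_of_snoc_invariant (fun z => (M₁.eval z, spliceStates M₁.accepts M₂ z))
    (fun p b => (M₁.step p.1 b, (M₂.step · b) '' p.2 ∪
      {s | (∃ v', M₁.evalFrom p.1 ([b] ++ v') ∈ M₁.accept) ∧ ∃ u', s = M₂.eval (u' ++ [b])}))
    {p | ∃ s ∈ p.2, s ∈ M₂.accept} (fun z b => ?_) (fun z => mem_spliceAtLetter_accepts _ _)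
  rw [DFA.eval_append_singleton, spliceStates_append_singleton, hpre]

theorem GSAx_cons_subset (a : α) (x w₁ w₂ : List α) : GSAx (a :: x) w₁ w₂ ⊆ GSAx [a] w₁ w₂ := by
  rintro z ⟨u₁, v₁, u₂, v₂, rfl, rfl, hz⟩
  exact ⟨u₁, x ++ v₁, u₂, x ++ v₂, by simp, by simp, by simpa using hz⟩

theorem GSAw_eq_iUnion_GSAx_singleton (w₁ w₂ : List α) : GSAw w₁ w₂ = ⋃ a, GSAx [a] w₁ w₂ := by
  refine subset_antisymm (Set.iUnion₂_subset ?_)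
    (Set.iUnion_subset fun a =>
      Set.subset_biUnion_of_mem (u := (GSAx · w₁ w₂)) (List.cons_ne_nil a []))
  rintro (_ | ⟨a, x⟩) hx
  · exact absurd rfl hx
  · exact (GSAx_cons_subset a x w₁ w₂).trans (Set.subset_iUnion (GSAx [·] w₁ w₂) a)

def letters (L : Language α) : Set α := {a | ∃ w ∈ L, a ∈ w}

theorem GSAL_eq (L₁ L₂ : Language α) :
    GSAL (L₁ : Set (List α)) L₂ =
      (L₁ ⊓ wordsMeeting (letters L₂)) + (L₂ ⊓ wordsMeeting (letters L₁)) +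
        spliceAtLetter L₁ L₂ + spliceAtLetter L₂ L₁ := by
  ext z
  simp only [GSAL, GSAw_eq_iUnion_GSAx_singleton, GSAx, Set.mem_iUnion, Set.mem_ofPred_eq]
  constructor
  · rintro ⟨w₁, h₁, w₂, h₂, a, u₁, v₁, u₂, v₂, rfl, rfl, rfl | rfl | rfl | rfl⟩
    · exact Or.inl <| Or.inl <| Or.inl ⟨h₁, a, by simp, _, h₂, by simp⟩
    · exact Or.inl <| Or.inl <| Or.inr ⟨h₂, a, by simp, _, h₁, by simp⟩
    · exact Or.inl <| Or.inr ⟨u₁, a, v₂, rfl, ⟨v₁, h₁⟩, u₂, h₂⟩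
    · exact Or.inr ⟨u₂, a, v₁, rfl, ⟨v₂, h₂⟩, u₁, h₁⟩
  · rintro (((⟨hz, a, haz, w, hw, haw⟩ | ⟨hz, a, haz, w, hw, haw⟩) |
        ⟨u, a, v, rfl, ⟨v', h₁⟩, u', h₂⟩) | ⟨u, a, v, rfl, ⟨v', h₂⟩, u', h₁⟩)
    · obtain ⟨u, v, rfl⟩ := List.append_of_mem haz
      obtain ⟨u', v', rfl⟩ := List.append_of_mem haw
      exact ⟨_, hz, _, hw, a, u, v, u', v', by simp, by simp, Or.inl (by simp)⟩
    · obtain ⟨u, v, rfl⟩ := List.append_of_mem haz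
      obtain ⟨u', v', rfl⟩ := List.append_of_mem haw
      exact ⟨_, hw, _, hz, a, u', v', u, v, by simp, by simp, Or.inr <| Or.inl (by simp)⟩
    · exact ⟨_, h₁, _, h₂, a, u, v', u', v, rfl, rfl, Or.inr <| Or.inr <| Or.inl rfl⟩
    · exact ⟨_, h₁, _, h₂, a, u', v, u, v', rfl, rfl, Or.inr <| Or.inr <| Or.inr rfl⟩

end

/-- Generalised self-assembly of two regular languages is regular. -/
theorem gsal_regular {α : Type} (L₁ L₂ : Language α)
    (h₁ : L₁.IsRegular) (h₂ : L₂.IsRegular) :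
    Language.IsRegular (GSAL (L₁ : Set (List α)) (L₂ : Set (List α))) := by
  rw [GSAL_eq]
  exact (((h₁.inf (isRegular_wordsMeeting _)).add (h₂.inf (isRegular_wordsMeeting _))).add
    (isRegular_spliceAtLetter h₁ h₂)).add (isRegular_spliceAtLetter h₂ h₁)
end

section
/- The generalised self-assembly of a finite language with a regular language is regular: if L₁ is finite and L₂ is regular, then GSA(L₁,L₂) is regular. -/
namespace Language

variable {α : Type*} {K L : Language α} {x z : List α}

theorem mem_mul_singleton_mul : z ∈ K * {x} * L ↔ ∃ u ∈ K, ∃ v ∈ L, u ++ x ++ v = z := by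
  simp only [mem_mul]
  constructor
  · rintro ⟨_, ⟨u, hu, _, rfl, rfl⟩, v, hv, rfl⟩
    exact ⟨u, hu, v, hv, rfl⟩
  · rintro ⟨u, hu, v, hv, rfl⟩
    exact ⟨_, ⟨u, hu, x, rfl, rfl⟩, v, hv, rfl⟩

theorem mem_top_mul_singleton_mul_top : z ∈ (⊤ * {x} * ⊤ : Language α) ↔ x <:+: z :=
  mem_mul_singleton_mul.trans
    ⟨fun ⟨u, _, v, _, h⟩ => ⟨u, v, h⟩, fun ⟨u, v, h⟩ => ⟨u, trivial, v, trivial, h⟩⟩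

theorem IsRegular.of_leftQuotient_mem {𝒮 : Set (Language α)} (h𝒮 : 𝒮.Finite)
    (h : ∀ z, L.leftQuotient z ∈ 𝒮) : L.IsRegular :=
  .of_finite_range_leftQuotient (h𝒮.subset (Set.range_subset_iff.2 h))

theorem isRegular_of_finite (hL : (L : Set (List α)).Finite) : L.IsRegular := by
  refine .of_leftQuotient_mem
    (((hL.biUnion fun w _ => w.sublists.finite_toSet).image L.leftQuotient).insert ⊥) fun z => ?_
  by_cases hz : ∃ w ∈ L, z <+: w
  · obtain ⟨w, hw, hzw⟩ := hz
    exact Or.inr ⟨z, Set.mem_biUnion hw (List.mem_sublists.2 hzw.sublist), rfl⟩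
  · exact Or.inl (eq_bot_iff.2 fun s hs => hz ⟨z ++ s, hs, List.prefix_append z s⟩)

theorem isRegular_top : (⊤ : Language α).IsRegular :=
  .of_leftQuotient_mem (Set.finite_singleton ⊤) fun _ => eq_top_iff.2 fun _ _ => trivial

theorem isRegular_singleton (x : List α) : ({x} : Language α).IsRegular :=
  isRegular_of_finite (Set.finite_singleton x)

theorem leftQuotient_mul (z : List α) :
    (K * L).leftQuotient z =
      K.leftQuotient z * L + ⨆ c ∈ {c | ∃ a ∈ K, a ++ c = z}, L.leftQuotient c := by
  ext s
  simp only [mem_leftQuotient, mem_mul, mem_add, mem_iSup]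
  constructor
  · rintro ⟨a, ha, b, hb, hab⟩
    rcases List.append_eq_append_iff.1 hab with ⟨c, rfl, rfl⟩ | ⟨c, rfl, rfl⟩
    · exact Or.inr ⟨c, ⟨a, ha, rfl⟩, hb⟩
    · exact Or.inl ⟨c, ha, b, hb, rfl⟩
  · rintro (⟨c, hc, b, hb, rfl⟩ | ⟨c, ⟨a, ha, rfl⟩, hc⟩)
    · exact ⟨z ++ c, hc, b, hb, List.append_assoc z c b⟩
    · exact ⟨a, ha, c ++ s, hc, (List.append_assoc a c s).symm⟩

theorem IsRegular.mul (hK : K.IsRegular) (hL : L.IsRegular) : (K * L).IsRegular :=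
  .of_leftQuotient_mem
    ((hK.finite_range_leftQuotient.prod hL.finite_range_leftQuotient.finite_subsets).image
      fun p => p.1 * L + sSup p.2) fun z =>
    ⟨(K.leftQuotient z, L.leftQuotient '' {c | ∃ a ∈ K, a ++ c = z}),
      ⟨Set.mem_range_self z, Set.image_subset_range _ _⟩, by rw [leftQuotient_mul, ← sSup_image]⟩

def leftContexts (L : Language α) (x : List α) : Language α := {u | ∃ v, u ++ x ++ v ∈ L}

def rightContexts (L : Language α) (x : List α) : Language α := {v | ∃ u, u ++ x ++ v ∈ L}

@[simp]
theorem mem_leftContexts : z ∈ L.leftContexts x ↔ ∃ v, z ++ x ++ v ∈ L := Iff.rfl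

@[simp]
theorem mem_rightContexts : z ∈ L.rightContexts x ↔ ∃ u, u ++ x ++ z ∈ L := Iff.rfl

theorem leftQuotient_leftContexts (x z : List α) :
    (L.leftContexts x).leftQuotient z = (L.leftQuotient z).leftContexts x := by
  ext s; simp

theorem leftQuotient_rightContexts (x z : List α) :
    (L.rightContexts x).leftQuotient z = ⨆ u, L.leftQuotient (u ++ x ++ z) := by
  ext s; simp [mem_iSup]

theorem IsRegular.leftContexts (hL : L.IsRegular) (x : List α) : (L.leftContexts x).IsRegular :=
  .of_leftQuotient_mem (hL.finite_range_leftQuotient.image (·.leftContexts x)) fun z =>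
    ⟨_, Set.mem_range_self z, (leftQuotient_leftContexts x z).symm⟩

theorem IsRegular.rightContexts (hL : L.IsRegular) (x : List α) : (L.rightContexts x).IsRegular :=
  .of_leftQuotient_mem (hL.finite_range_leftQuotient.finite_subsets.image sSup) fun z =>
    ⟨_, Set.range_subset_iff.2 fun u => Set.mem_range_self (u ++ x ++ z),
      (leftQuotient_rightContexts x z).symm⟩

theorem isRegular_biSup {ι : Type*} {S : Set ι} (hS : S.Finite) {f : ι → Language α}
    (h : ∀ i ∈ S, (f i).IsRegular) : (⨆ i ∈ S, f i).IsRegular := by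
  induction S, hS using Set.Finite.induction_on with
  | empty => simpa using isRegular_of_finite (L := ⊥) Set.finite_empty
  | @insert i S _ _ ih =>
    rw [iSup_insert]
    exact (h i (S.mem_insert i)).add (ih fun j hj => h j (S.mem_insert_of_mem i hj))

theorem finite_setOf_isInfix {L : Set (List α)} (hL : L.Finite) :
    {x | ∃ w ∈ L, x <:+: w}.Finite :=
  (hL.biUnion fun w _ => w.sublists.finite_toSet).subset fun _ ⟨_, hw, hxw⟩ =>
    Set.mem_biUnion hw (List.mem_sublists.2 hxw.sublist)

end Language

open Language

variable {α : Type*} {L₁ L₂ : Language α} {x z : List α}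

def gsaAlong (L₁ L₂ : Language α) (x : List α) : Language α :=
  L₁ ⊓ ⊤ * {x} * ⊤ + L₂ ⊓ ⊤ * {x} * ⊤ +
    L₁.leftContexts x * {x} * L₂.rightContexts x + L₂.leftContexts x * {x} * L₁.rightContexts x

theorem isRegular_gsaAlong (h₁ : L₁.IsRegular) (h₂ : L₂.IsRegular) (x : List α) :
    (gsaAlong L₁ L₂ x).IsRegular :=
  have hx := isRegular_singleton x
  have hF := (isRegular_top.mul hx).mul isRegular_top
  (((h₁.inf hF).add (h₂.inf hF)).add (((h₁.leftContexts x).mul hx).mul (h₂.rightContexts x))).add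
    (((h₂.leftContexts x).mul hx).mul (h₁.rightContexts x))

theorem mem_gsaAlong (hx₁ : ∃ w ∈ L₁, x <:+: w) (hx₂ : ∃ w ∈ L₂, x <:+: w) :
    z ∈ gsaAlong L₁ L₂ x ↔ ∃ w₁ ∈ L₁, ∃ w₂ ∈ L₂, z ∈ GSAx x w₁ w₂ := by
  simp only [gsaAlong, mem_add, mem_inf, mem_top_mul_singleton_mul_top]
  simp only [mem_mul_singleton_mul, mem_leftContexts, mem_rightContexts, GSAx]
  constructor
  · rintro (((⟨hz, u₁, v₁, rfl⟩ | ⟨hz, u₂, v₂, rfl⟩) | ⟨u₁, ⟨v₁, h₁⟩, v₂, ⟨u₂, h₂⟩, rfl⟩) |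
      ⟨u₂, ⟨v₂, h₂⟩, v₁, ⟨u₁, h₁⟩, rfl⟩)
    · obtain ⟨w₂, hw₂, u₂, v₂, rfl⟩ := hx₂
      exact ⟨_, hz, _, hw₂, u₁, v₁, u₂, v₂, rfl, rfl, Or.inl rfl⟩
    · obtain ⟨w₁, hw₁, u₁, v₁, rfl⟩ := hx₁
      exact ⟨_, hw₁, _, hz, u₁, v₁, u₂, v₂, rfl, rfl, Or.inr (Or.inl rfl)⟩
    · exact ⟨_, h₁, _, h₂, u₁, v₁, u₂, v₂, rfl, rfl, Or.inr (Or.inr (Or.inl rfl))⟩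
    · exact ⟨_, h₁, _, h₂, u₁, v₁, u₂, v₂, rfl, rfl, Or.inr (Or.inr (Or.inr rfl))⟩
  · rintro ⟨_, hw₁, _, hw₂, u₁, v₁, u₂, v₂, rfl, rfl, rfl | rfl | rfl | rfl⟩
    · exact Or.inl (Or.inl (Or.inl ⟨hw₁, u₁, v₁, rfl⟩))
    · exact Or.inl (Or.inl (Or.inr ⟨hw₂, u₂, v₂, rfl⟩))
    · exact Or.inl (Or.inr ⟨u₁, ⟨v₁, hw₁⟩, v₂, ⟨u₂, hw₂⟩, rfl⟩)
    · exact Or.inr ⟨u₂, ⟨v₂, hw₂⟩, v₁, ⟨u₁, hw₁⟩, rfl⟩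

theorem isInfix_of_mem_GSAx {w₁ w₂ : List α} (hz : z ∈ GSAx x w₁ w₂) : x <:+: w₁ ∧ x <:+: w₂ := by
  obtain ⟨u₁, v₁, u₂, v₂, rfl, rfl, -⟩ := hz
  exact ⟨⟨u₁, v₁, rfl⟩, ⟨u₂, v₂, rfl⟩⟩

theorem mem_GSAL {L₁ L₂ : Set (List α)} :
    z ∈ GSAL L₁ L₂ ↔ ∃ w₁ ∈ L₁, ∃ w₂ ∈ L₂, ∃ x ≠ [], z ∈ GSAx x w₁ w₂ := by
  simp [GSAL, GSAw]

theorem GSAL_eq_iSup (L₁ L₂ : Language α) :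
    (GSAL (L₁ : Set (List α)) L₂ : Language α) =
      ⨆ x ∈ {x | x ≠ [] ∧ (∃ w ∈ L₁, x <:+: w) ∧ ∃ w ∈ L₂, x <:+: w}, gsaAlong L₁ L₂ x := by
  ext z
  refine mem_GSAL.trans ⟨?_, fun hz => ?_⟩
  · rintro ⟨w₁, hw₁, w₂, hw₂, x, hx, hz⟩
    have hx₁ : ∃ w ∈ L₁, x <:+: w := ⟨w₁, hw₁, (isInfix_of_mem_GSAx hz).1⟩
    have hx₂ : ∃ w ∈ L₂, x <:+: w := ⟨w₂, hw₂, (isInfix_of_mem_GSAx hz).2⟩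
    exact mem_iSup.2 ⟨x, mem_iSup.2
      ⟨⟨hx, hx₁, hx₂⟩, (mem_gsaAlong hx₁ hx₂).2 ⟨w₁, hw₁, w₂, hw₂, hz⟩⟩⟩
  · obtain ⟨x, hz⟩ := mem_iSup.1 hz
    obtain ⟨⟨hx, hx₁, hx₂⟩, hz⟩ := mem_iSup.1 hz
    obtain ⟨w₁, hw₁, w₂, hw₂, hz⟩ := (mem_gsaAlong hx₁ hx₂).1 hz
    exact ⟨w₁, hw₁, w₂, hw₂, x, hx, hz⟩

/-- Generalised self-assembly of a finite language with a regular language is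
regular. -/
theorem gsal_fin_reg_regular {α : Type} (L₁ L₂ : Language α)
    (h₁ : (L₁ : Set (List α)).Finite) (h₂ : L₂.IsRegular) :
    Language.IsRegular (GSAL (L₁ : Set (List α)) (L₂ : Set (List α))) := by
  rw [GSAL_eq_iSup]
  exact isRegular_biSup ((finite_setOf_isInfix h₁).subset fun _ hx => hx.2.1)
    fun x _ => isRegular_gsaAlong (isRegular_of_finite h₁) h₂ x
end

section
/- The generalised self-assembly of two context-free languages is context-free: if L₁ and L₂ are context-free languages (without the empty word), then GSA(L₁,L₂) is context-free. -/
/-!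
A nonempty common factor `x = a :: x'` of `w₁` and `w₂` may be shortened to the letter `a`
(moving `x'` into the suffixes) without changing the four assembled words. Hence `GSA(L₁, L₂)` is
the finite union, over the letters `a` occurring in `L₁`, of `Pref_a(L₁) a Suf_a(L₂)`,
`Pref_a(L₂) a Suf_a(L₁)`, and the words of `L₁` (resp. `L₂`) containing `a` when the other
language has such a word. Context-free languages are closed under finite unions and products
and under these cuts at a letter: the grammar for a cut annotates every nonterminal with a mode,
either unmarked (derive as before, or derive and erase) or marked (derive the part of the word
around the occurrence of `a` that descends from it). Suffixes reduce to prefixes by reversal.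
Each grammar is shown sound by an interpretation of its nonterminals closed under its rules.
-/

/-! ### Interpreting sentential forms -/

namespace Symbol

variable {T N M : Type}

def map (f : N → M) : Symbol T N → Symbol T M
  | .terminal t => .terminal t
  | .nonterminal A => .nonterminal (f A)

@[simp] lemma map_comp_terminal (f : N → M) : map f ∘ (terminal : T → Symbol T N) = terminal :=
  rfl

def eval (I : N → Language T) : Symbol T N → Language T
  | .terminal t => {[t]}
  | .nonterminal A => I A

def evalList (I : N → Language T) (σ : List (Symbol T N)) : Language T :=
  (σ.map (eval I)).prod

variable {I J : N → Language T}

@[simp] lemma evalList_nil : evalList I [] = 1 := rfl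

@[simp] lemma mem_eval_terminal {t : T} {w : List T} : w ∈ eval I (terminal t) ↔ w = [t] :=
  Iff.rfl

@[simp] lemma eval_nonterminal (A : N) : eval I (nonterminal A) = I A := rfl

lemma evalList_cons (s : Symbol T N) (σ : List (Symbol T N)) :
    evalList I (s :: σ) = eval I s * evalList I σ := List.prod_cons

@[simp] lemma evalList_append (σ τ : List (Symbol T N)) :
    evalList I (σ ++ τ) = evalList I σ * evalList I τ := by
  simp [evalList]

@[simp] lemma evalList_singleton (s : Symbol T N) : evalList I [s] = eval I s := by
  simp [evalList]

lemma mem_evalList_map_terminal (w : List T) : w ∈ evalList I (w.map terminal) := by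
  induction w with
  | nil => exact Language.nil_mem_one
  | cons t w ih => exact Language.append_mem_mul (Set.mem_singleton [t]) ih

lemma evalList_mono (h : ∀ A, I A ≤ J A) (σ : List (Symbol T N)) :
    evalList I σ ≤ evalList J σ := by
  induction σ with
  | nil => rfl
  | cons s σ ih =>
    refine mul_le_mul' ?_ ih
    cases s with
    | terminal t => rfl
    | nonterminal A => exact h A

lemma evalList_map (f : N → M) (I : M → Language T) (σ : List (Symbol T N)) :
    evalList I (σ.map (map f)) = evalList (I ∘ f) σ := by
  induction σ with
  | nil => rfl
  | cons s σ ih => cases s <;> simp [ih, map, eval, evalList_cons]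

lemma forall_mem_of_mem_evalList {P : T → Prop} (hI : ∀ A, ∀ w ∈ I A, ∀ t ∈ w, P t)
    {σ : List (Symbol T N)} (hσ : ∀ t, terminal t ∈ σ → P t) :
    ∀ w ∈ evalList I σ, ∀ t ∈ w, P t := by
  induction σ with
  | nil => simp
  | cons s σ ih =>
    intro w hw
    rw [evalList_cons] at hw
    obtain ⟨w₁, hw₁, w₂, hw₂, rfl⟩ := Language.mem_mul.mp hw
    have h₁ : ∀ t ∈ w₁, P t := by
      cases s with
      | terminal t' => simp_all
      | nonterminal A => exact hI A w₁ hw₁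
    simpa [or_imp, forall_and] using ⟨h₁, ih (fun t ht => hσ t (.tail _ ht)) w₂ hw₂⟩

end Symbol

open Symbol

namespace ContextFreeGrammar

variable {T : Type} {g : ContextFreeGrammar T}

lemma Derives.append {σ₁ τ₁ σ₂ τ₂ : List (Symbol T g.NT)} (h₁ : g.Derives σ₁ τ₁)
    (h₂ : g.Derives σ₂ τ₂) : g.Derives (σ₁ ++ σ₂) (τ₁ ++ τ₂) :=
  (h₁.append_right σ₂).trans (h₂.append_left τ₁)

def languageFrom (g : ContextFreeGrammar T) (A : g.NT) : Language T :=
  {w | g.Derives [.nonterminal A] (w.map .terminal)}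

@[simp] lemma mem_languageFrom {A : g.NT} {w : List T} :
    w ∈ g.languageFrom A ↔ g.Derives [.nonterminal A] (w.map .terminal) :=
  Iff.rfl

@[simp] lemma languageFrom_initial : g.languageFrom g.initial = g.language := rfl

lemma evalList_le_of_derives {I : g.NT → Language T}
    (hI : ∀ r ∈ g.rules, evalList I r.output ≤ I r.input) {σ τ : List (Symbol T g.NT)}
    (h : g.Derives σ τ) : evalList I τ ≤ evalList I σ := by
  induction h with
  | refl => rfl
  | tail _ hstep ih =>
    obtain ⟨r, hr, hrw⟩ := hstep
    obtain ⟨x, y, rfl, rfl⟩ := hrw.exists_parts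
    refine le_trans ?_ ih
    simp only [evalList_append, evalList_singleton, eval]
    gcongr
    exact hI r hr

lemma language_le_of_rules {I : g.NT → Language T}
    (hI : ∀ r ∈ g.rules, evalList I r.output ≤ I r.input) : g.language ≤ I g.initial := by
  intro w hw
  simpa [eval] using evalList_le_of_derives hI hw (mem_evalList_map_terminal w)

lemma derives_of_mem_evalList {σ : List (Symbol T g.NT)} {w : List T}
    (hw : w ∈ evalList g.languageFrom σ) : g.Derives σ (w.map .terminal) := by
  induction σ generalizing w with
  | nil => obtain rfl : w = [] := hw; rfl
  | cons s σ ih =>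
    obtain ⟨u, hu, v, hv, rfl⟩ := Language.mem_mul.mp hw
    have hs : g.Derives [s] (u.map .terminal) := by
      cases s with
      | terminal t => obtain rfl : u = [t] := hu; rfl
      | nonterminal A => exact hu
    simpa using hs.append (ih hv)

lemma evalList_languageFrom_le {r : ContextFreeRule T g.NT} (hr : r ∈ g.rules) :
    evalList g.languageFrom r.output ≤ g.languageFrom r.input := fun _ hw =>
  Produces.trans_derives ⟨r, hr, .input_output⟩ (derives_of_mem_evalList hw)

end ContextFreeGrammar

namespace ContextFreeRule

variable {T N M : Type}

def map (f : N → M) (r : ContextFreeRule T N) : ContextFreeRule T M :=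
  ⟨f r.input, r.output.map (Symbol.map f)⟩

end ContextFreeRule

namespace ContextFreeGrammar

variable {T : Type}

lemma Derives.map {g G : ContextFreeGrammar T} {f : g.NT → G.NT}
    (hf : ∀ r ∈ g.rules, r.map f ∈ G.rules) {σ τ : List (Symbol T g.NT)} (h : g.Derives σ τ) :
    G.Derives (σ.map (Symbol.map f)) (τ.map (Symbol.map f)) := by
  induction h with
  | refl => rfl
  | tail _ hstep ih =>
    obtain ⟨r, hr, hrw⟩ := hstep
    obtain ⟨x, y, rfl, rfl⟩ := hrw.exists_parts
    refine ih.trans_produces ⟨r.map f, hf r hr, ?_⟩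
    simpa [ContextFreeRule.map, Symbol.map] using
      (r.map f).rewrites_of_exists_parts (x.map (Symbol.map f)) (y.map (Symbol.map f))

lemma languageFrom_le_of_map {g G : ContextFreeGrammar T} {f : g.NT → G.NT}
    (hf : ∀ r ∈ g.rules, r.map f ∈ G.rules) (A : g.NT) :
    g.languageFrom A ≤ G.languageFrom (f A) := fun w hw => by
  show G.Derives _ _
  simpa [Symbol.map] using Derives.map hf hw

open Classical in
noncomputable abbrev combine (g₁ g₂ : ContextFreeGrammar T)
    (starts : Finset (List (Symbol T (g₁.NT ⊕ g₂.NT)))) : ContextFreeGrammar T where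
  NT := Option (g₁.NT ⊕ g₂.NT)
  initial := none
  rules := starts.image (fun σ => ⟨none, σ.map (Symbol.map some)⟩) ∪
    g₁.rules.image (ContextFreeRule.map (some ∘ Sum.inl)) ∪
    g₂.rules.image (ContextFreeRule.map (some ∘ Sum.inr))

variable {g₁ g₂ : ContextFreeGrammar T} {starts : Finset (List (Symbol T (g₁.NT ⊕ g₂.NT)))}

lemma mem_language_combine {w : List T} :
    w ∈ (combine g₁ g₂ starts).language ↔
      ∃ σ ∈ starts, w ∈ evalList (Sum.elim g₁.languageFrom g₂.languageFrom) σ := by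
  classical
  set J := Sum.elim g₁.languageFrom g₂.languageFrom
  constructor
  · intro hw
    let I : Option (g₁.NT ⊕ g₂.NT) → Language T := fun A =>
      A.elim {w | ∃ σ ∈ starts, w ∈ evalList J σ} J
    refine language_le_of_rules (I := I) ?_ hw
    intro r hr
    simp only [combine, Finset.mem_union, Finset.mem_image] at hr
    rcases hr with (⟨σ, hσ, rfl⟩ | ⟨r, hr, rfl⟩) | ⟨r, hr, rfl⟩
    · intro v hv
      rw [evalList_map] at hv
      exact ⟨σ, hσ, hv⟩
    all_goals
      rw [ContextFreeRule.map, evalList_map]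
      exact evalList_languageFrom_le hr
  · rintro ⟨σ, hσ, hw⟩
    have hstart : (combine g₁ g₂ starts).Produces [.nonterminal none] (σ.map (Symbol.map some)) :=
      ⟨⟨none, σ.map (Symbol.map some)⟩,
        Finset.mem_union_left _ <| Finset.mem_union_left _ <| Finset.mem_image_of_mem _ hσ,
        .input_output⟩
    refine hstart.trans_derives (derives_of_mem_evalList ?_)
    rw [evalList_map]
    refine evalList_mono (fun A => ?_) σ hw
    cases A with
    | inl A =>
      exact languageFrom_le_of_map (G := combine g₁ g₂ starts) (f := some ∘ Sum.inl)
        (fun r hr => Finset.mem_union_left _ <| Finset.mem_union_right _ <|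
          Finset.mem_image_of_mem _ hr) A
    | inr A =>
      exact languageFrom_le_of_map (G := combine g₁ g₂ starts) (f := some ∘ Sum.inr)
        (fun r hr => Finset.mem_union_right _ <| Finset.mem_image_of_mem _ hr) A

end ContextFreeGrammar

/-! ### Unions and products -/

namespace Language.IsContextFree

open ContextFreeGrammar

variable {T : Type} {L₁ L₂ : Language T}

protected lemma add (h₁ : L₁.IsContextFree) (h₂ : L₂.IsContextFree) :
    (L₁ + L₂).IsContextFree := by
  obtain ⟨g₁, rfl⟩ := h₁
  obtain ⟨g₂, rfl⟩ := h₂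
  classical
  refine ⟨combine g₁ g₂ {[.nonterminal (.inl g₁.initial)], [.nonterminal (.inr g₂.initial)]},
    Language.ext fun w => ?_⟩
  rw [mem_language_combine]
  simp [Language.mem_add]

protected lemma mul (h₁ : L₁.IsContextFree) (h₂ : L₂.IsContextFree) :
    (L₁ * L₂).IsContextFree := by
  obtain ⟨g₁, rfl⟩ := h₁
  obtain ⟨g₂, rfl⟩ := h₂
  classical
  refine ⟨combine g₁ g₂ {[.nonterminal (.inl g₁.initial), .nonterminal (.inr g₂.initial)]},
    Language.ext fun w => ?_⟩
  rw [mem_language_combine]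
  simp [evalList_cons]

protected lemma zero : (0 : Language T).IsContextFree :=
  ⟨⟨Unit, (), ∅⟩, language_eq_zero_of_forall_input_ne_initial (by simp)⟩

end Language.IsContextFree

/-! ### Cutting words at a letter -/

namespace List

variable {α : Type*} {u v x o y p q : List α} {s : α}

lemma append_eq_append_cons (h : u ++ v = p ++ s :: q) :
    (∃ m, u = p ++ s :: m ∧ q = m ++ v) ∨ (∃ m, v = m ++ s :: q ∧ p = u ++ m) := by
  rcases List.append_eq_append_iff.mp h with ⟨m, rfl, rfl⟩ | ⟨m, rfl, hm⟩
  · exact .inr ⟨m, rfl, rfl⟩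
  · rcases List.cons_eq_append_iff.mp hm with ⟨rfl, rfl⟩ | ⟨m', rfl, rfl⟩
    · exact .inr ⟨[], rfl, by simp⟩
    · exact .inl ⟨m', rfl, rfl⟩

lemma append_append_eq_append_cons (h : x ++ o ++ y = p ++ s :: q) :
    (∃ m, x = p ++ s :: m ∧ q = m ++ o ++ y) ∨
    (∃ m₁ m₂, o = m₁ ++ s :: m₂ ∧ p = x ++ m₁ ∧ q = m₂ ++ y) ∨
    (∃ m, y = m ++ s :: q ∧ p = x ++ o ++ m) := by
  rcases append_eq_append_cons h with ⟨m, hxo, rfl⟩ | h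
  · rcases append_eq_append_cons hxo with ⟨m', rfl, rfl⟩ | ⟨m', rfl, rfl⟩
    · exact .inl ⟨m', rfl, by simp⟩
    · exact .inr (.inl ⟨m', m, rfl, rfl, rfl⟩)
  · exact .inr (.inr h)

def keepIf (b : Bool) (w : List α) : List α := if b then w else []

variable {β : Type*} (b : Bool)

@[simp] lemma keepIf_true (w : List α) : keepIf true w = w := rfl

@[simp] lemma keepIf_false (w : List α) : keepIf false w = [] := rfl

@[simp] lemma keepIf_nil : keepIf b ([] : List α) = [] := by cases b <;> rfl

@[simp] lemma keepIf_append (w₁ w₂ : List α) :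
    keepIf b (w₁ ++ w₂) = keepIf b w₁ ++ keepIf b w₂ := by cases b <;> rfl

lemma map_keepIf (f : α → β) (w : List α) : (keepIf b w).map f = keepIf b (w.map f) := by
  cases b <;> rfl

end List

open List (keepIf)

def Language.cutAt {T : Type} (a : T) (keepMark keepRest : Bool) (L : Language T) :
    Language T :=
  {w | ∃ u v, u ++ a :: v ∈ L ∧ w = u ++ keepIf keepMark [a] ++ keepIf keepRest v}

@[simp] lemma Language.mem_cutAt {T : Type} {a : T} {keepMark keepRest : Bool} {L : Language T}
    {w : List T} : w ∈ L.cutAt a keepMark keepRest ↔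
      ∃ u v, u ++ a :: v ∈ L ∧ w = u ++ keepIf keepMark [a] ++ keepIf keepRest v :=
  Iff.rfl

/-- `s` can be the symbol from which a marked occurrence of `a` descends. -/
def Symbol.Markable {T N : Type} (a : T) (s : Symbol T N) : Prop :=
  ∀ t, s = .terminal t → t = a

namespace ContextFreeGrammar

inductive CutMode : Type
  | unmarked (keep : Bool)
  | marked

section Cut

variable {T N : Type} (a : T) (keepMark keepRest : Bool)

def liftSym (b : Bool) : Symbol T N → List (Symbol T (N × CutMode))
  | .terminal t => keepIf b [.terminal t]
  | .nonterminal A => [.nonterminal (A, .unmarked b)]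

def lift (b : Bool) (σ : List (Symbol T N)) : List (Symbol T (N × CutMode)) :=
  σ.flatMap (liftSym b)

def markSym : Symbol T N → List (Symbol T (N × CutMode))
  | .terminal t => keepIf keepMark [.terminal t]
  | .nonterminal A => [.nonterminal (A, .marked)]

@[simp] lemma markSym_nonterminal (A : N) :
    markSym (T := T) keepMark (.nonterminal A) = [.nonterminal (A, .marked)] :=
  rfl

def cutForm (p : List (Symbol T N)) (s : Symbol T N) (q : List (Symbol T N)) :
    List (Symbol T (N × CutMode)) :=
  lift true p ++ markSym keepMark s ++ lift keepRest q

@[simp] lemma lift_nil (b : Bool) : lift b ([] : List (Symbol T N)) = [] := rfl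

@[simp] lemma lift_cons (b : Bool) (s : Symbol T N) (σ : List (Symbol T N)) :
    lift b (s :: σ) = liftSym b s ++ lift b σ := rfl

@[simp] lemma lift_append (b : Bool) (σ τ : List (Symbol T N)) :
    lift b (σ ++ τ) = lift b σ ++ lift b τ := List.flatMap_append

lemma lift_map_terminal (b : Bool) (w : List T) :
    lift (N := N) b (w.map .terminal) = (keepIf b w).map .terminal := by
  cases b <;> induction w <;> simp_all [liftSym]

open Classical in
noncomputable def cutRules (r : ContextFreeRule T N) : List (ContextFreeRule T (N × CutMode)) :=
  ⟨(r.input, .unmarked true), lift true r.output⟩ ::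
  ⟨(r.input, .unmarked false), lift false r.output⟩ ::
  (r.output.inits.zip r.output.tails).filterMap fun
    | (p, s :: q) =>
      if s.Markable a then some ⟨(r.input, .marked), cutForm keepMark keepRest p s q⟩ else none
    | (_, []) => none

lemma mem_cutRules {r : ContextFreeRule T N} {r' : ContextFreeRule T (N × CutMode)} :
    r' ∈ cutRules a keepMark keepRest r ↔
      (∃ b, r' = ⟨(r.input, .unmarked b), lift b r.output⟩) ∨
      ∃ p s q, r.output = p ++ s :: q ∧ s.Markable a ∧
        r' = ⟨(r.input, .marked), cutForm keepMark keepRest p s q⟩ := by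
  classical
  simp only [cutRules, List.mem_cons, List.mem_filterMap, Prod.exists, List.mem_zip_inits_tails]
  constructor
  · rintro (rfl | rfl | ⟨p, _ | ⟨s, q⟩, hpq, hr'⟩)
    · exact .inl ⟨true, rfl⟩
    · exact .inl ⟨false, rfl⟩
    · simp at hr'
    · simp only at hr'
      split_ifs at hr' with hs
      exact .inr ⟨p, s, q, hpq.symm, hs, (Option.some.inj hr').symm⟩
  · rintro (⟨_ | _, rfl⟩ | ⟨p, s, q, hpq, hs, rfl⟩)
    · exact .inr (.inl rfl)
    · exact .inl rfl
    · exact .inr (.inr ⟨p, s :: q, hpq.symm, by simp [hs]⟩)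

open Classical in
/-- `(A, .unmarked b)` derives the words of `A`, erased unless `b`; `(A, .marked)` derives their
cuts at an occurrence of `a` descending from it. -/
noncomputable abbrev cutGrammar (g : ContextFreeGrammar T) : ContextFreeGrammar T where
  NT := g.NT × CutMode
  initial := (g.initial, .marked)
  rules := g.rules.biUnion fun r => (cutRules a keepMark keepRest r).toFinset

end Cut

section CutSound

variable {T : Type} (a : T) (keepMark keepRest : Bool) (g : ContextFreeGrammar T)

lemma mem_cutGrammar_rules {r' : ContextFreeRule T (g.NT × CutMode)} :
    r' ∈ (cutGrammar a keepMark keepRest g).rules ↔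
      ∃ r ∈ g.rules, r' ∈ cutRules a keepMark keepRest r := by
  classical
  simp

def cutInterp : g.NT × CutMode → Language T
  | (A, .unmarked b) => {w | ∃ v ∈ g.languageFrom A, w = keepIf b v}
  | (A, .marked) => (g.languageFrom A).cutAt a keepMark keepRest

variable {a keepMark keepRest g}

@[simp] lemma mem_cutInterp_unmarked {A : g.NT} {b : Bool} {w : List T} :
    w ∈ cutInterp a keepMark keepRest g (A, .unmarked b) ↔ ∃ v ∈ g.languageFrom A, w = keepIf b v :=
  Iff.rfl

@[simp] lemma cutInterp_marked (A : g.NT) :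
    cutInterp a keepMark keepRest g (A, .marked) = (g.languageFrom A).cutAt a keepMark keepRest :=
  rfl

lemma mem_evalList_lift {b : Bool} {σ : List (Symbol T g.NT)} {w : List T}
    (hw : w ∈ evalList (cutInterp a keepMark keepRest g) (lift b σ)) :
    ∃ v, g.Derives σ (v.map .terminal) ∧ w = keepIf b v := by
  induction σ generalizing w with
  | nil => exact ⟨[], .refl _, by simpa using hw⟩
  | cons s σ ih =>
    rw [lift_cons, evalList_append] at hw
    obtain ⟨w₁, hw₁, w₂, hw₂, rfl⟩ := Language.mem_mul.mp hw
    obtain ⟨v₂, hσ, rfl⟩ := ih hw₂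
    obtain ⟨v₁, hs, rfl⟩ : ∃ v₁, g.Derives [s] (v₁.map .terminal) ∧ w₁ = keepIf b v₁ := by
      cases s with
      | terminal t => cases b <;> exact ⟨[t], .refl _, by simpa [liftSym] using hw₁⟩
      | nonterminal A => simpa [liftSym] using hw₁
    exact ⟨v₁ ++ v₂, by simpa using hs.append hσ, by simp⟩

lemma mem_evalList_markSym {s : Symbol T g.NT} (hs : s.Markable a) {w : List T}
    (hw : w ∈ evalList (cutInterp a keepMark keepRest g) (markSym keepMark s)) :
    ∃ u v, g.Derives [s] ((u ++ a :: v).map .terminal) ∧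
      w = u ++ keepIf keepMark [a] ++ keepIf keepRest v := by
  cases s with
  | terminal t =>
    obtain rfl := hs t rfl
    refine ⟨[], [], .refl _, ?_⟩
    cases keepMark <;> simpa [markSym] using hw
  | nonterminal A =>
    simpa [markSym] using hw

lemma cutInterp_closed :
    ∀ r ∈ (cutGrammar a keepMark keepRest g).rules,
      evalList (cutInterp a keepMark keepRest g) r.output ≤
        cutInterp a keepMark keepRest g r.input := by
  intro r' hr' w hw
  obtain ⟨r, hr, hr'⟩ := (mem_cutGrammar_rules a keepMark keepRest g).mp hr'
  have hstep : g.Produces [.nonterminal r.input] r.output := ⟨r, hr, .input_output⟩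
  rcases (mem_cutRules a keepMark keepRest).mp hr' with ⟨b, rfl⟩ | ⟨p, s, q, hout, hs, rfl⟩
  · obtain ⟨v, hv, rfl⟩ := mem_evalList_lift hw
    exact ⟨v, hstep.trans_derives hv, rfl⟩
  · simp only [cutForm, evalList_append] at hw
    obtain ⟨w₁₂, hw₁₂, w₃, hw₃, rfl⟩ := Language.mem_mul.mp hw
    obtain ⟨w₁, hw₁, w₂, hw₂, rfl⟩ := Language.mem_mul.mp hw₁₂
    obtain ⟨v₁, hp, h₁⟩ := mem_evalList_lift hw₁
    obtain ⟨u, v, hsd, rfl⟩ := mem_evalList_markSym hs hw₂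
    obtain ⟨v₃, hq, rfl⟩ := mem_evalList_lift hw₃
    rw [List.keepIf_true] at h₁
    subst h₁
    refine ⟨w₁ ++ u, v ++ v₃, ?_, by simp⟩
    have hd : g.Derives (p ++ s :: q) ((w₁ ++ u ++ a :: (v ++ v₃)).map .terminal) := by
      simpa using (hp.append hsd).append hq
    rw [hout] at hstep
    exact hstep.trans_derives hd

lemma cutGrammar_language_le :
    (cutGrammar a keepMark keepRest g).language ≤ g.language.cutAt a keepMark keepRest :=
  language_le_of_rules cutInterp_closed

end CutSound

section CutComplete

variable {T : Type} {a : T} {keepMark keepRest : Bool} {g : ContextFreeGrammar T}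

lemma produces_lift (b : Bool) {σ τ : List (Symbol T g.NT)} (h : g.Produces σ τ) :
    (cutGrammar a keepMark keepRest g).Produces (lift b σ) (lift b τ) := by
  obtain ⟨r, hr, hrw⟩ := h
  obtain ⟨x, y, rfl, rfl⟩ := hrw.exists_parts
  refine ⟨⟨(r.input, .unmarked b), lift b r.output⟩,
    (mem_cutGrammar_rules a keepMark keepRest g).mpr ⟨r, hr, (mem_cutRules ..).mpr (.inl ⟨b, rfl⟩)⟩,
    ?_⟩
  simpa [liftSym] using ContextFreeRule.rewrites_of_exists_parts _ (lift b x) (lift b y)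

lemma produces_cutForm {r : ContextFreeRule T g.NT} (hr : r ∈ g.rules)
    {p q : List (Symbol T g.NT)} {s : Symbol T g.NT} (hout : r.output = p ++ s :: q)
    (hs : s.Markable a) (x y : List (Symbol T g.NT)) :
    (cutGrammar a keepMark keepRest g).Produces
      (cutForm keepMark keepRest x (.nonterminal r.input) y)
      (cutForm keepMark keepRest (x ++ p) s (q ++ y)) := by
  refine ⟨⟨(r.input, .marked), cutForm keepMark keepRest p s q⟩,
    (mem_cutGrammar_rules a keepMark keepRest g).mpr
      ⟨r, hr, (mem_cutRules ..).mpr (.inr ⟨p, s, q, hout, hs, rfl⟩)⟩, ?_⟩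
  simpa [cutForm] using ContextFreeRule.rewrites_of_exists_parts
    ⟨(r.input, .marked), cutForm keepMark keepRest p s q⟩ (lift true x) (lift keepRest y)

/-- The rewritten nonterminal lies left of the marked symbol of `τ`, is its parent in `σ`, or lies
right of it. -/
lemma exists_cutForm_of_produces {σ τ : List (Symbol T g.NT)} (h : g.Produces σ τ)
    {p q : List (Symbol T g.NT)} {s : Symbol T g.NT} (hτ : τ = p ++ s :: q) (hs : s.Markable a) :
    ∃ p' s' q', σ = p' ++ s' :: q' ∧ s'.Markable a ∧
      (cutGrammar a keepMark keepRest g).Derives (cutForm keepMark keepRest p' s' q')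
        (cutForm keepMark keepRest p s q) := by
  obtain ⟨r, hr, hrw⟩ := h
  obtain ⟨x, y, rfl, rfl⟩ := hrw.exists_parts
  rcases List.append_append_eq_append_cons hτ with
    ⟨m, rfl, rfl⟩ | ⟨m₁, m₂, hout, rfl, rfl⟩ | ⟨m, rfl, rfl⟩
  · refine ⟨p, s, m ++ [.nonterminal r.input] ++ y, by simp, hs, .single ?_⟩
    have := (produces_lift (a := a) (keepMark := keepMark) (keepRest := keepRest) keepRest
      (⟨r, hr, r.rewrites_of_exists_parts m y⟩ : g.Produces _ _)).append_left
        (lift true p ++ markSym keepMark s)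
    simpa [cutForm] using this
  · exact ⟨x, .nonterminal r.input, y, by simp, (fun _ h => by cases h),
      .single (produces_cutForm hr hout hs x y)⟩
  · refine ⟨x ++ [.nonterminal r.input] ++ m, s, q, by simp, hs, .single ?_⟩
    have := (produces_lift (a := a) (keepMark := keepMark) (keepRest := keepRest) true
      (⟨r, hr, r.rewrites_of_exists_parts x m⟩ : g.Produces _ _)).append_right
        (markSym keepMark s ++ lift keepRest q)
    simpa [cutForm] using this

lemma exists_cutForm_of_derives {σ τ : List (Symbol T g.NT)} (h : g.Derives σ τ)
    {p q : List (Symbol T g.NT)} {s : Symbol T g.NT} (hτ : τ = p ++ s :: q) (hs : s.Markable a) :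
    ∃ p' s' q', σ = p' ++ s' :: q' ∧ s'.Markable a ∧
      (cutGrammar a keepMark keepRest g).Derives (cutForm keepMark keepRest p' s' q')
        (cutForm keepMark keepRest p s q) := by
  induction h generalizing p s q with
  | refl => exact ⟨p, s, q, hτ, hs, .refl _⟩
  | tail _ hstep ih =>
    obtain ⟨p₁, s₁, q₁, hmid, hs₁, hd₁⟩ := exists_cutForm_of_produces hstep hτ hs
    obtain ⟨p', s', q', hσ, hs', hd⟩ := ih hmid hs₁
    exact ⟨p', s', q', hσ, hs', hd.trans hd₁⟩

lemma cutAt_le_cutGrammar_language :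
    g.language.cutAt a keepMark keepRest ≤ (cutGrammar a keepMark keepRest g).language := by
  rintro _ ⟨u, v, hw, rfl⟩
  obtain ⟨p', s', q', hS, -, hd⟩ := exists_cutForm_of_derives (keepMark := keepMark)
    (keepRest := keepRest) hw (p := u.map .terminal) (s := .terminal a) (q := v.map .terminal)
    (by simp) (fun _ h => (Symbol.terminal.inj h).symm)
  obtain ⟨rfl, rfl, rfl⟩ : p' = [] ∧ s' = .nonterminal g.initial ∧ q' = [] := by
    rcases p' with _ | ⟨_, _⟩ <;> simp_all
  change (cutGrammar a keepMark keepRest g).Derives _ (List.map _ _)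
  simpa [cutForm, markSym, lift_map_terminal, List.map_keepIf, liftSym] using hd

end CutComplete

end ContextFreeGrammar

lemma Language.IsContextFree.cutAt {T : Type} {L : Language T} (h : L.IsContextFree) (a : T)
    (keepMark keepRest : Bool) : (L.cutAt a keepMark keepRest).IsContextFree := by
  obtain ⟨g, rfl⟩ := h
  exact ⟨.cutGrammar a keepMark keepRest g,
    le_antisymm ContextFreeGrammar.cutGrammar_language_le
      ContextFreeGrammar.cutAt_le_cutGrammar_language⟩

namespace Language

variable {T : Type} {L : Language T}

def suffixAfter (a : T) (L : Language T) : Language T :=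
  {v | ∃ u, u ++ a :: v ∈ L}

lemma mem_suffixAfter {a : T} {v : List T} : v ∈ L.suffixAfter a ↔ ∃ u, u ++ a :: v ∈ L :=
  Iff.rfl

lemma suffixAfter_eq_reverse_cutAt (a : T) :
    L.suffixAfter a = (L.reverse.cutAt a false false).reverse := by
  ext v
  simp only [mem_suffixAfter, mem_reverse, mem_cutAt, List.keepIf_false, List.append_nil]
  constructor
  · rintro ⟨u, hu⟩
    exact ⟨v.reverse, u.reverse, by simpa using hu, rfl⟩
  · rintro ⟨u, v', hv, hu⟩
    exact ⟨v'.reverse, by simpa [← hu] using hv⟩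

lemma mem_sum {ι : Type*} (s : Finset ι) (f : ι → Language T) (w : List T) :
    w ∈ ∑ i ∈ s, f i ↔ ∃ i ∈ s, w ∈ f i := by
  induction s using Finset.cons_induction with
  | empty => simp
  | cons i s hi ih => simp [Finset.sum_cons, mem_add, ih]

namespace IsContextFree

lemma suffixAfter (h : L.IsContextFree) (a : T) : (L.suffixAfter a).IsContextFree := by
  rw [suffixAfter_eq_reverse_cutAt]
  exact (h.reverse.cutAt a false false).reverse

lemma iSup_prop {P : Prop} (h : P → L.IsContextFree) : (⨆ _ : P, L).IsContextFree := by
  by_cases hP : P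
  · rw [iSup_pos hP]
    exact h hP
  · rw [iSup_neg hP]
    exact IsContextFree.zero

protected lemma sum {ι : Type*} (s : Finset ι) {f : ι → Language T}
    (h : ∀ i ∈ s, (f i).IsContextFree) : (∑ i ∈ s, f i).IsContextFree := by
  induction s using Finset.cons_induction with
  | empty => exact IsContextFree.zero
  | cons i s hi ih =>
    rw [Finset.sum_cons]
    exact (h i (Finset.mem_cons_self i s)).add (ih fun j hj => h j (Finset.mem_cons_of_mem hj))

lemma finite_letters (h : L.IsContextFree) : {a | ∃ w ∈ L, a ∈ w}.Finite := by
  obtain ⟨g, rfl⟩ := h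
  set F := {t | ∃ r ∈ g.rules, Symbol.terminal t ∈ r.output}
  have hF : F.Finite := by
    refine (g.rules.finite_toSet.biUnion fun r _ => ?_).subset fun t ⟨r, hr, ht⟩ =>
      Set.mem_biUnion hr ht
    exact r.output.finite_toSet.preimage (fun _ _ _ _ h => Symbol.terminal.inj h)
  refine hF.subset ?_
  rintro a ⟨w, hw, ha⟩
  let I : g.NT → Language T := fun _ => {w | ∀ t ∈ w, t ∈ F}
  exact ContextFreeGrammar.language_le_of_rules (I := I) (fun r hr =>
    forall_mem_of_mem_evalList (fun _ _ hw => hw) fun t ht => ⟨r, hr, ht⟩) hw a ha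

end IsContextFree

end Language

/-! ### Self-assembly along a letter -/

section SelfAssembly

variable {T : Type}

lemma mem_GSAw_iff {w₁ w₂ z : List T} : z ∈ GSAw w₁ w₂ ↔ ∃ a, z ∈ GSAx [a] w₁ w₂ := by
  simp only [GSAw, Set.mem_iUnion, Set.mem_ofPred_eq, exists_prop]
  constructor
  · rintro ⟨x, hx, u₁, v₁, u₂, v₂, rfl, rfl, hz⟩
    obtain ⟨a, x, rfl⟩ := List.exists_cons_of_ne_nil hx
    exact ⟨a, u₁, x ++ v₁, u₂, x ++ v₂, by simp, by simp, by simpa using hz⟩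
  · rintro ⟨a, hz⟩
    exact ⟨[a], List.cons_ne_nil a [], hz⟩

def GSALetter (a : T) (L₁ L₂ : Language T) : Language T :=
  L₁.cutAt a true false * L₂.suffixAfter a + L₂.cutAt a true false * L₁.suffixAfter a +
    (⨆ _ : ∃ w₂ ∈ L₂, a ∈ w₂, L₁.cutAt a true true) +
    (⨆ _ : ∃ w₁ ∈ L₁, a ∈ w₁, L₂.cutAt a true true)

lemma mem_GSALetter {a : T} {L₁ L₂ : Language T} {z : List T} :
    z ∈ GSALetter a L₁ L₂ ↔ ∃ w₁ ∈ L₁, ∃ w₂ ∈ L₂, z ∈ GSAx [a] w₁ w₂ := by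
  simp only [GSALetter, Language.mem_add, Language.mem_mul, Language.mem_iSup,
    Language.mem_cutAt, Language.mem_suffixAfter, List.keepIf_true, List.keepIf_false,
    List.append_nil, exists_prop, GSAx, Set.mem_ofPred_eq]
  constructor
  · rintro (((⟨_, ⟨u₁, v₁, h₁, rfl⟩, v₂, ⟨u₂, h₂⟩, rfl⟩ |
        ⟨_, ⟨u₂, v₂, h₂, rfl⟩, v₁, ⟨u₁, h₁⟩, rfl⟩) |
      ⟨⟨w₂, h₂, ha⟩, u₁, v₁, h₁, rfl⟩) | ⟨⟨w₁, h₁, ha⟩, u₂, v₂, h₂, rfl⟩)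
    · exact ⟨_, h₁, _, h₂, u₁, v₁, u₂, v₂, by simp, by simp, by simp⟩
    · exact ⟨_, h₁, _, h₂, u₁, v₁, u₂, v₂, by simp, by simp, by simp⟩
    · obtain ⟨u₂, v₂, rfl⟩ := List.append_of_mem ha
      exact ⟨_, h₁, _, h₂, u₁, v₁, u₂, v₂, by simp, by simp, by simp⟩
    · obtain ⟨u₁, v₁, rfl⟩ := List.append_of_mem ha
      exact ⟨_, h₁, _, h₂, u₁, v₁, u₂, v₂, by simp, by simp, by simp⟩
  · rintro ⟨_, h₁, _, h₂, u₁, v₁, u₂, v₂, rfl, rfl, rfl | rfl | rfl | rfl⟩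
    · exact .inl (.inr ⟨⟨_, h₂, by simp⟩, u₁, v₁, by simpa using h₁, rfl⟩)
    · exact .inr ⟨⟨_, h₁, by simp⟩, u₂, v₂, by simpa using h₂, rfl⟩
    · exact .inl (.inl (.inl ⟨_, ⟨u₁, v₁, by simpa using h₁, rfl⟩, v₂, ⟨u₂, by simpa using h₂⟩,
        by simp⟩))
    · exact .inl (.inl (.inr ⟨_, ⟨u₂, v₂, by simpa using h₂, rfl⟩, v₁, ⟨u₁, by simpa using h₁⟩,
        by simp⟩))

lemma GSAL_eq_sum {L₁ L₂ : Language T} {F : Finset T} (hF : ∀ w ∈ L₁, ∀ a ∈ w, a ∈ F) :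
    GSAL (L₁ : Set (List T)) (L₂ : Set (List T)) = (∑ a ∈ F, GSALetter a L₁ L₂ : Language T) := by
  ext z
  simp only [GSAL, Set.mem_iUnion, mem_GSAw_iff, exists_prop]
  change _ ↔ z ∈ ∑ a ∈ F, GSALetter a L₁ L₂
  simp only [Language.mem_sum, mem_GSALetter]
  constructor
  · rintro ⟨w₁, hw₁, w₂, hw₂, a, hz⟩
    refine ⟨a, hF w₁ hw₁ a ?_, w₁, hw₁, w₂, hw₂, hz⟩
    obtain ⟨u₁, v₁, -, -, rfl, -⟩ := hz
    simp
  · rintro ⟨a, -, w₁, hw₁, w₂, hw₂, hz⟩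
    exact ⟨w₁, hw₁, w₂, hw₂, a, hz⟩

lemma isContextFree_GSALetter {L₁ L₂ : Language T} (h₁ : L₁.IsContextFree)
    (h₂ : L₂.IsContextFree) (a : T) : (GSALetter a L₁ L₂).IsContextFree :=
  ((((h₁.cutAt a true false).mul (h₂.suffixAfter a)).add
    ((h₂.cutAt a true false).mul (h₁.suffixAfter a))).add
    (.iSup_prop fun _ => h₁.cutAt a true true)).add (.iSup_prop fun _ => h₂.cutAt a true true)

end SelfAssembly

theorem gsal_contextFree_general {T : Type} (L₁ L₂ : Language T)
    (h₁ : L₁.IsContextFree) (h₂ : L₂.IsContextFree) :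
    Language.IsContextFree (GSAL (L₁ : Set (List T)) (L₂ : Set (List T))) := by
  rw [GSAL_eq_sum (F := h₁.finite_letters.toFinset) fun w hw a ha => by simpa using ⟨w, hw, ha⟩]
  exact .sum _ fun a _ => isContextFree_GSALetter h₁ h₂ a

/-- Generalised self-assembly of two ε-free context-free languages is
context-free. -/
theorem gsal_contextFree {T : Type} (L₁ L₂ : Language T)
    (h₁ : L₁.IsContextFree) (h₂ : L₂.IsContextFree)
    (he₁ : [] ∉ L₁) (he₂ : [] ∉ L₂) :
    Language.IsContextFree (GSAL (L₁ : Set (List T)) (L₂ : Set (List T))) :=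
  gsal_contextFree_general L₁ L₂ h₁ h₂
end

section
/- GSA(L₁,L₂) can be expressed via single-symbol overlaps: GSA(L₁,L₂) equals the union of L₁' ∪ L₂' with the set {u₁ a v₂ : u₁ a v₁ ∈ L₁, u₂ a v₂ ∈ L₂ for some words u₁,v₁,u₂,v₂ and symbol a} ∪ {u₂ a v₁ : u₁ a v₁ ∈ L₁, u₂ a v₂ ∈ L₂}, where L₁' (resp. L₂') is the set of words of L₁ (resp. L₂) sharing a nonempty subword with some word of L₂ (resp. L₁). In particular, overlapping over a single symbol generates the same crossover words as overlapping over arbitrary nonempty subwords. -/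
/-!
Of the four words of an `x`-self-assembly, two are the inputs themselves and two are genuine
crossovers. Writing `x = a :: x'`, the crossover `u₁ x v₂` equals `u₁ [a] (x' v₂)`, and
`w₁ = u₁ [a] (x' v₁)`, `w₂ = u₂ [a] (x' v₂)`: every crossover at `x` is already a crossover at
the single symbol `a`.
-/

namespace GSAx

variable {α : Type*}

def crossovers (x w₁ w₂ : List α) : Set (List α) :=
  {z | ∃ u₁ v₁ u₂ v₂ : List α, w₁ = u₁ ++ x ++ v₁ ∧ w₂ = u₂ ++ x ++ v₂ ∧
    (z = u₁ ++ x ++ v₂ ∨ z = u₂ ++ x ++ v₁)}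

theorem mem_iff {x w₁ w₂ z : List α} :
    z ∈ GSAx x w₁ w₂ ↔
      (x <:+: w₁ ∧ x <:+: w₂ ∧ (z = w₁ ∨ z = w₂)) ∨ z ∈ crossovers x w₁ w₂ := by
  constructor
  · rintro ⟨u₁, v₁, u₂, v₂, rfl, rfl, hz⟩
    have hx₁ : x <:+: u₁ ++ x ++ v₁ := ⟨u₁, v₁, rfl⟩
    have hx₂ : x <:+: u₂ ++ x ++ v₂ := ⟨u₂, v₂, rfl⟩
    rcases hz with hz | hz | hz
    · exact .inl ⟨hx₁, hx₂, .inl hz⟩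
    · exact .inl ⟨hx₁, hx₂, .inr hz⟩
    · exact .inr ⟨u₁, v₁, u₂, v₂, rfl, rfl, hz⟩
  · rintro (⟨⟨u₁, v₁, rfl⟩, ⟨u₂, v₂, rfl⟩, hz⟩ | ⟨u₁, v₁, u₂, v₂, rfl, rfl, hz⟩)
    · exact ⟨u₁, v₁, u₂, v₂, rfl, rfl, hz.imp_right .inl⟩
    · exact ⟨u₁, v₁, u₂, v₂, rfl, rfl, .inr (.inr hz)⟩

theorem crossovers_cons_subset (a : α) (x w₁ w₂ : List α) :
    crossovers (a :: x) w₁ w₂ ⊆ crossovers [a] w₁ w₂ := by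
  rintro z ⟨u₁, v₁, u₂, v₂, rfl, rfl, hz⟩
  refine ⟨u₁, x ++ v₁, u₂, x ++ v₂, by simp, by simp, ?_⟩
  simpa using hz

end GSAx

theorem mem_GSAL_iff {α : Type*} {L₁ L₂ : Set (List α)} {z : List α} :
    z ∈ GSAL L₁ L₂ ↔ ∃ w₁ ∈ L₁, ∃ w₂ ∈ L₂, ∃ x : List α, x ≠ [] ∧ z ∈ GSAx x w₁ w₂ := by
  simp [GSAL, GSAw]

open GSAx

/-- GSA(L₁,L₂) is generated by single-symbol overlaps, together with the
words of each language sharing a nonempty subword with a word of the other. -/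
theorem gsal_eq_single_symbol_overlaps {α : Type*} (L₁ L₂ : Set (List α)) :
    GSAL L₁ L₂ =
      {w ∈ L₁ | ∃ w₂ ∈ L₂, ∃ x : List α, x ≠ [] ∧ x <:+: w ∧ x <:+: w₂} ∪
      {w ∈ L₂ | ∃ w₁ ∈ L₁, ∃ x : List α, x ≠ [] ∧ x <:+: w ∧ x <:+: w₁} ∪
      {z | ∃ (a : α) (u₁ v₁ u₂ v₂ : List α),
        u₁ ++ [a] ++ v₁ ∈ L₁ ∧ u₂ ++ [a] ++ v₂ ∈ L₂ ∧
        (z = u₁ ++ [a] ++ v₂ ∨ z = u₂ ++ [a] ++ v₁)} := by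
  ext z
  rw [mem_GSAL_iff]
  constructor
  · rintro ⟨w₁, h₁, w₂, h₂, x, hx, hz⟩
    rcases mem_iff.1 hz with ⟨hx₁, hx₂, rfl | rfl⟩ | hcross
    · exact .inl (.inl ⟨h₁, w₂, h₂, x, hx, hx₁, hx₂⟩)
    · exact .inl (.inr ⟨h₂, w₁, h₁, x, hx, hx₂, hx₁⟩)
    · obtain ⟨a, x, rfl⟩ := List.exists_cons_of_ne_nil hx
      obtain ⟨u₁, v₁, u₂, v₂, rfl, rfl, hsplit⟩ := crossovers_cons_subset a x w₁ w₂ hcross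
      exact .inr ⟨a, u₁, v₁, u₂, v₂, h₁, h₂, hsplit⟩
  · rintro ((⟨hz, w₂, h₂, x, hx, hx₁, hx₂⟩ | ⟨hz, w₁, h₁, x, hx, hx₂, hx₁⟩) |
      ⟨a, u₁, v₁, u₂, v₂, h₁, h₂, hz⟩)
    · exact ⟨z, hz, w₂, h₂, x, hx, mem_iff.2 (.inl ⟨hx₁, hx₂, .inl rfl⟩)⟩
    · exact ⟨w₁, h₁, z, hz, x, hx, mem_iff.2 (.inl ⟨hx₁, hx₂, .inr rfl⟩)⟩
    · exact ⟨_, h₁, _, h₂, [a], List.cons_ne_nil a [],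
        mem_iff.2 (.inr ⟨u₁, v₁, u₂, v₂, rfl, rfl, hz⟩)⟩
end
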